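/- The operation (F', f', A')·(F, f, A) = ( F' + A'·F + Υ_{f'} ∘ (A'·f) − Υ_{A'·f} ∘ f', f' + A'·f, A'A ) makes the set Hom_R(H, 𝔱) × Hom_R(H, Λ²H) × GL(H) into a group, where A'·f and A'·F denote the natural GL(H)-actions given by (A·f)(u) = Λ²A(f(A⁻¹u)) and (A·F)(u) = (A ⊗ Λ²A)(F(A⁻¹u)). -/

import Mathlib

/-!
On the first two coordinates the product is `(F', f')·(F, f) = (F' + A'·F + c(f', A'·f), f' + A'·f)`
with `c(f, g) = Υ_f ∘ g − Υ_g ∘ f`, a twisted semidirect product. Associativity only needs `c` to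
be biadditive and `GL(H)`-equivariant, `A·c(f, g) = c(A·f, A·g)`. Biadditivity is the additivity
of `f ↦ Υ_f`. Equivariance holds because `ν` is given by a formula natural in `u, v, w` (whatever
its coefficients), so `ν(Au, Λ²A ξ) = (A ⊗ Λ²A) ν(u, ξ)`, whence `Υ_{A·f} ∘ (A·g) = A·(Υ_f ∘ g)`.
Since `c(f, -f) = 0`, the inverse of `(F, f, A)` is `(-(A⁻¹·F), -(A⁻¹·f), A⁻¹)`.
-/

namespace Paper

open ExteriorAlgebra

open scoped TensorProduct

variable {R : Type*} [CommRing R] {H : Type*} [AddCommGroup H] [Module R H]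

theorem wedge_mem (v w : H) : ι R v * ι R w ∈ ⋀[R]^2 H := by
  rw [show (⋀[R]^2 H) = LinearMap.range (ι R (M := H)) * LinearMap.range (ι R (M := H)) from
    sq _]
  exact Submodule.mul_mem_mul (LinearMap.mem_range_self _ v) (LinearMap.mem_range_self _ w)

/-- The wedge product `H × H → Λ²H` as a bilinear map. -/
noncomputable def wedge : H →ₗ[R] H →ₗ[R] ↥(⋀[R]^2 H) :=
  LinearMap.mk₂ R (fun v w => ⟨ι R v * ι R w, wedge_mem v w⟩)
    (fun v v' w => Subtype.ext (by simp [add_mul]))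
    (fun c v w => Subtype.ext (by simp [smul_mul_assoc]))
    (fun v w w' => Subtype.ext (by simp [mul_add]))
    (fun c v w => Subtype.ext (by simp [mul_smul_comm]))

/-- The submodule `𝔱 ⊆ H ⊗ Λ²H` spanned by the elements `u⊗(v∧w) − v⊗(w∧u)`. -/
noncomputable def tSub (R : Type*) [CommRing R] (H : Type*) [AddCommGroup H] [Module R H] :
    Submodule R (H ⊗[R] ↥(⋀[R]^2 H)) :=
  Submodule.span R
    {x | ∃ u v w : H, x = u ⊗ₜ[R] (wedge v w) - v ⊗ₜ[R] (wedge w u)}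

theorem map_exteriorPower_le (f : H →ₗ[R] H) (n : ℕ) :
    Submodule.map (ExteriorAlgebra.map f).toLinearMap (⋀[R]^n H) ≤ ⋀[R]^n H := by
  rw [show ((⋀[R]^n H : Submodule R (ExteriorAlgebra R H))) =
      (LinearMap.range (ι R (M := H))) ^ n from rfl, Submodule.map_pow]
  have h1 : Submodule.map (ExteriorAlgebra.map f).toLinearMap
      (LinearMap.range (ι R (M := H))) ≤ LinearMap.range (ι R (M := H)) := by
    intro x hx
    rw [Submodule.mem_map] at hx
    obtain ⟨y, hy, rfl⟩ := hx
    rw [LinearMap.mem_range] at hy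
    obtain ⟨v, rfl⟩ := hy
    exact ⟨f v, (map_apply_ι f v).symm⟩
  induction n with
  | zero => simp
  | succ n ih =>
      rw [pow_succ, pow_succ]
      exact mul_le_mul' ih h1

/-- The endomorphism `Λ²f` of `Λ²H` induced by an endomorphism `f` of `H`. -/
noncomputable def map2 (f : H →ₗ[R] H) : ↥(⋀[R]^2 H) →ₗ[R] ↥(⋀[R]^2 H) :=
  (ExteriorAlgebra.map f).toLinearMap.restrict (p := ⋀[R]^2 H) (q := ⋀[R]^2 H)
    (fun x hx => map_exteriorPower_le f 2 (Submodule.mem_map_of_mem hx))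

theorem map2_wedge (f : H →ₗ[R] H) (v w : H) :
    map2 f (wedge (R := R) v w) = wedge (R := R) (f v) (f w) :=
  Subtype.ext (by simp [map2, LinearMap.restrict_apply, wedge, map_apply_ι])

theorem tSub_stable (A : H →ₗ[R] H) (x : H ⊗[R] ↥(⋀[R]^2 H)) (hx : x ∈ tSub R H) :
    TensorProduct.map A (map2 A) x ∈ tSub R H := by
  induction hx using Submodule.span_induction with
  | mem y hy =>
      obtain ⟨u, v, w, rfl⟩ := hy
      rw [map_sub, TensorProduct.map_tmul, TensorProduct.map_tmul, map2_wedge, map2_wedge]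
      exact Submodule.subset_span ⟨A u, A v, A w, rfl⟩
  | zero => simpa using Submodule.zero_mem _
  | add a b ha hb iha ihb => rw [map_add]; exact Submodule.add_mem _ iha ihb
  | smul c a ha iha => rw [map_smul]; exact Submodule.smul_mem _ _ iha

/-- The action of an endomorphism `A` of `H` on `𝔱 ⊆ H ⊗ Λ²H`, by `A ⊗ Λ²A`. -/
noncomputable def tRestrict (A : H →ₗ[R] H) : ↥(tSub R H) →ₗ[R] ↥(tSub R H) :=
  (TensorProduct.map A (map2 A)).restrict (p := tSub R H) (q := tSub R H) (tSub_stable A)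


/-- Helper instances for the submodule `𝔱` (typeclass search struggles with the nested
subtype). -/
noncomputable instance tSubAddCommGroup : AddCommGroup ↥(tSub R H) :=
  @Submodule.addCommGroup R (H ⊗[R] ↥(⋀[R]^2 H)) _ _ _ (tSub R H)

noncomputable instance tSubModule : Module R ↥(tSub R H) :=
  @Submodule.module R (H ⊗[R] ↥(⋀[R]^2 H)) _ _ _ (tSub R H)

section A3

variable [Invertible (2 : R)] [Invertible (3 : R)]

/-- The action `(A·f)(u) = Λ²A(f(A⁻¹u))` of `GL(H)` on `Hom(H, Λ²H)`. -/
noncomputable def actf (A : H ≃ₗ[R] H) (f : H →ₗ[R] ↥(⋀[R]^2 H)) : H →ₗ[R] ↥(⋀[R]^2 H) :=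
  map2 (A : H →ₗ[R] H) ∘ₗ f ∘ₗ (A.symm : H →ₗ[R] H)

/-- The action `(A·F)(u) = (A ⊗ Λ²A)(F(A⁻¹u))` of `GL(H)` on `Hom(H, 𝔱)`. -/
noncomputable def actF (A : H ≃ₗ[R] H) (F : H →ₗ[R] ↥(tSub R H)) : H →ₗ[R] ↥(tSub R H) :=
  tRestrict (A : H →ₗ[R] H) ∘ₗ F ∘ₗ (A.symm : H →ₗ[R] H)

/-- The multiplication on `𝒜 = Hom(H, 𝔱) × Hom(H, Λ²H) × GL(H)`:
`(F', f', A')·(F, f, A) = (F' + A'·F + Υ_{f'} ∘ (A'·f) − Υ_{A'·f} ∘ f', f' + A'·f, A'A)`. -/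
noncomputable def aMul (Υ : (H →ₗ[R] ↥(⋀[R]^2 H)) → (↥(⋀[R]^2 H) →ₗ[R] ↥(tSub R H)))
    (x y : (H →ₗ[R] ↥(tSub R H)) × (H →ₗ[R] ↥(⋀[R]^2 H)) × (H ≃ₗ[R] H)) :
    (H →ₗ[R] ↥(tSub R H)) × (H →ₗ[R] ↥(⋀[R]^2 H)) × (H ≃ₗ[R] H) :=
  (x.1 + actF x.2.2 y.1 + Υ x.2.1 ∘ₗ actf x.2.2 y.2.1 - Υ (actf x.2.2 y.2.1) ∘ₗ x.2.1,
    x.2.1 + actf x.2.2 y.2.1,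
    x.2.2 * y.2.2)

end A3

section Functoriality

@[ext]
theorem linearMap_ext_wedge {M : Type*} [AddCommGroup M] [Module R M]
    {φ ψ : ↥(⋀[R]^2 H) →ₗ[R] M}
    (h : ∀ u v : H, φ (wedge (R := R) u v) = ψ (wedge (R := R) u v)) : φ = ψ := by
  refine exteriorPower.linearMap_ext (AlternatingMap.ext fun a => ?_)
  have ha : exteriorPower.ιMulti R 2 a = wedge (R := R) (a 0) (a 1) :=
    Subtype.ext (by simp [wedge, ExteriorAlgebra.ιMulti_apply, Matrix.vecTail])
  simpa [ha] using h (a 0) (a 1)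

theorem map2_id : map2 (LinearMap.id : H →ₗ[R] H) = LinearMap.id := by
  ext u v; simp [map2_wedge]

theorem map2_comp (A B : H →ₗ[R] H) : map2 (A ∘ₗ B) = map2 A ∘ₗ map2 B := by
  ext u v; simp [map2_wedge]

@[simp]
theorem coe_tRestrict (A : H →ₗ[R] H) (x : ↥(tSub R H)) :
    (tRestrict A x : H ⊗[R] ↥(⋀[R]^2 H)) = TensorProduct.map A (map2 A) x := rfl

theorem tRestrict_id : tRestrict (LinearMap.id : H →ₗ[R] H) = LinearMap.id := by
  ext x
  simp [map2_id]

theorem tRestrict_comp (A B : H →ₗ[R] H) :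
    tRestrict (A ∘ₗ B) = tRestrict A ∘ₗ tRestrict B := by
  ext x
  simp [map2_comp, TensorProduct.map_comp]

end Functoriality

section Action

theorem actf_one (f : H →ₗ[R] ↥(⋀[R]^2 H)) : actf 1 f = f := by
  simp only [actf, LinearEquiv.coe_toLinearMap_one, map2_id]
  rfl

theorem actf_mul (A B : H ≃ₗ[R] H) (f : H →ₗ[R] ↥(⋀[R]^2 H)) :
    actf (A * B) f = actf A (actf B f) := by
  rw [actf, LinearEquiv.coe_toLinearMap_mul, Module.End.mul_eq_comp, map2_comp]
  rfl

theorem actf_add (A : H ≃ₗ[R] H) (f g : H →ₗ[R] ↥(⋀[R]^2 H)) :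
    actf A (f + g) = actf A f + actf A g := by
  ext u : 1; simp [actf]

theorem actf_zero (A : H ≃ₗ[R] H) : actf A (0 : H →ₗ[R] ↥(⋀[R]^2 H)) = 0 := by
  ext u : 1; simp [actf]

theorem actf_neg (A : H ≃ₗ[R] H) (f : H →ₗ[R] ↥(⋀[R]^2 H)) : actf A (-f) = -actf A f := by
  ext u : 1; simp [actf]

theorem actF_one (F : H →ₗ[R] ↥(tSub R H)) : actF 1 F = F := by
  simp only [actF, LinearEquiv.coe_toLinearMap_one, tRestrict_id]
  rfl

theorem actF_mul (A B : H ≃ₗ[R] H) (F : H →ₗ[R] ↥(tSub R H)) :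
    actF (A * B) F = actF A (actF B F) := by
  rw [actF, LinearEquiv.coe_toLinearMap_mul, Module.End.mul_eq_comp, tRestrict_comp]
  rfl

theorem actF_add (A : H ≃ₗ[R] H) (F G : H →ₗ[R] ↥(tSub R H)) :
    actF A (F + G) = actF A F + actF A G := by
  ext u : 1; simp [actF]

theorem actF_sub (A : H ≃ₗ[R] H) (F G : H →ₗ[R] ↥(tSub R H)) :
    actF A (F - G) = actF A F - actF A G := by
  ext u : 1; simp [actF]

theorem actF_zero (A : H ≃ₗ[R] H) : actF A (0 : H →ₗ[R] ↥(tSub R H)) = 0 := by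
  ext u : 1; simp [actF]

theorem actF_neg (A : H ≃ₗ[R] H) (F : H →ₗ[R] ↥(tSub R H)) : actF A (-F) = -actF A F := by
  ext u : 1; simp [actF]

end Action

section Upsilon

variable {ν : H →ₗ[R] ↥(⋀[R]^2 H) →ₗ[R] ↥(tSub R H)}

theorem nu_map_map2 {a b c : R}
    (hν : ∀ u v w : H, (↑(ν u (wedge (R := R) v w)) : H ⊗[R] ↥(⋀[R]^2 H)) =
      a • u ⊗ₜ[R] wedge (R := R) v w - b • v ⊗ₜ[R] wedge (R := R) w u -
        c • w ⊗ₜ[R] wedge (R := R) u v)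
    (A : H →ₗ[R] H) (u : H) (ξ : ↥(⋀[R]^2 H)) :
    ν (A u) (map2 A ξ) = tRestrict A (ν u ξ) := by
  have h : ν (A u) ∘ₗ map2 A = tRestrict A ∘ₗ ν u := by
    ext v w
    simp [map2_wedge, hν]
  exact LinearMap.congr_fun h ξ

variable {Υ : (H →ₗ[R] ↥(⋀[R]^2 H)) → (↥(⋀[R]^2 H) →ₗ[R] ↥(tSub R H))}
  (hΥ : ∀ (f : H →ₗ[R] ↥(⋀[R]^2 H)) (u v : H),
    Υ f (wedge (R := R) u v) = ν u (f v) - ν v (f u))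
include hΥ

theorem upsilon_add (f g : H →ₗ[R] ↥(⋀[R]^2 H)) : Υ (f + g) = Υ f + Υ g := by
  ext u v
  simp only [hΥ, LinearMap.add_apply, map_add]
  exact (sub_add_sub_comm _ _ _ _).symm

theorem upsilon_actf_comp_actf
    (hν : ∀ (A : H →ₗ[R] H) (u : H) (ξ : ↥(⋀[R]^2 H)),
      ν (A u) (map2 A ξ) = tRestrict A (ν u ξ))
    (A : H ≃ₗ[R] H) (f g : H →ₗ[R] ↥(⋀[R]^2 H)) :
    Υ (actf A f) ∘ₗ actf A g = actF A (Υ f ∘ₗ g) := by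
  have h : Υ (actf A f) ∘ₗ map2 (A : H →ₗ[R] H) = tRestrict (A : H →ₗ[R] H) ∘ₗ Υ f := by
    ext u v
    simp [map2_wedge, hΥ, actf, ← hν]
  calc Υ (actf A f) ∘ₗ actf A g
      = (Υ (actf A f) ∘ₗ map2 (A : H →ₗ[R] H)) ∘ₗ g ∘ₗ (A.symm : H →ₗ[R] H) := rfl
    _ = actF A (Υ f ∘ₗ g) := by rw [h]; rfl

end Upsilon

section GroupLaw

variable (R H) in
abbrev Triple : Type _ := (H →ₗ[R] ↥(tSub R H)) × (H →ₗ[R] ↥(⋀[R]^2 H)) × (H ≃ₗ[R] H)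

noncomputable def aOne : Triple R H := (0, 0, 1)

noncomputable def aInv (x : Triple R H) : Triple R H :=
  (-actF x.2.2⁻¹ x.1, -actf x.2.2⁻¹ x.2.1, x.2.2⁻¹)

variable {Υ : (H →ₗ[R] ↥(⋀[R]^2 H)) → (↥(⋀[R]^2 H) →ₗ[R] ↥(tSub R H))}
  (hadd : ∀ f g : H →ₗ[R] ↥(⋀[R]^2 H), Υ (f + g) = Υ f + Υ g)
include hadd

theorem aMul_assoc
    (hequiv : ∀ (A : H ≃ₗ[R] H) (f g : H →ₗ[R] ↥(⋀[R]^2 H)),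
      Υ (actf A f) ∘ₗ actf A g = actF A (Υ f ∘ₗ g))
    (x y z : Triple R H) : aMul Υ (aMul Υ x y) z = aMul Υ x (aMul Υ y z) := by
  obtain ⟨F₁, f₁, A₁⟩ := x
  obtain ⟨F₂, f₂, A₂⟩ := y
  obtain ⟨F₃, f₃, A₃⟩ := z
  simp only [aMul, Prod.mk.injEq]
  refine ⟨?_, by rw [actf_mul, actf_add, add_assoc], mul_assoc _ _ _⟩
  simp only [actf_mul, actF_mul, actf_add, actF_add, actF_sub, hadd, LinearMap.add_comp,
    LinearMap.comp_add, hequiv]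
  abel

theorem aOne_aMul (x : Triple R H) : aMul Υ aOne x = x := by
  have hzero : Υ 0 = 0 := (AddMonoidHom.mk' Υ hadd).map_zero
  obtain ⟨F, f, A⟩ := x
  simp [aMul, aOne, actF_one, actf_one, hzero]

theorem aMul_aOne (x : Triple R H) : aMul Υ x aOne = x := by
  have hzero : Υ 0 = 0 := (AddMonoidHom.mk' Υ hadd).map_zero
  obtain ⟨F, f, A⟩ := x
  simp [aMul, aOne, actF_zero, actf_zero, hzero]

theorem aMul_aInv (x : Triple R H) : aMul Υ x (aInv x) = aOne := by
  have hneg (f) : Υ (-f) = -Υ f := (AddMonoidHom.mk' Υ hadd).map_neg f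
  obtain ⟨F, f, A⟩ := x
  simp only [aMul, aInv, aOne, Prod.mk.injEq, actf_neg, actF_neg, ← actf_mul, ← actF_mul,
    mul_inv_cancel, actf_one, actF_one, hneg, LinearMap.comp_neg, LinearMap.neg_comp]
  exact ⟨by abel, by abel, trivial⟩

theorem aInv_aMul (x : Triple R H) : aMul Υ (aInv x) x = aOne := by
  have hneg (f) : Υ (-f) = -Υ f := (AddMonoidHom.mk' Υ hadd).map_neg f
  obtain ⟨F, f, A⟩ := x
  simp only [aMul, aInv, aOne, Prod.mk.injEq, inv_mul_cancel, hneg, LinearMap.comp_neg,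
    LinearMap.neg_comp]
  exact ⟨by abel, by abel, trivial⟩

end GroupLaw

section A3

variable [Invertible (2 : R)] [Invertible (3 : R)]

theorem stmt11_general
    (ν : H →ₗ[R] ↥(⋀[R]^2 H) →ₗ[R] ↥(tSub R H))
    (hν : ∀ u v w : H,
      (↑(ν u (wedge (R := R) v w)) : H ⊗[R] ↥(⋀[R]^2 H)) =
        ((2 : R) * ⅟(3 : R)) • u ⊗ₜ[R] wedge (R := R) v w -
          ⅟(3 : R) • v ⊗ₜ[R] wedge (R := R) w u -
          ⅟(3 : R) • w ⊗ₜ[R] wedge (R := R) u v)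
    (Υ : (H →ₗ[R] ↥(⋀[R]^2 H)) → (↥(⋀[R]^2 H) →ₗ[R] ↥(tSub R H)))
    (hΥ : ∀ (f : H →ₗ[R] ↥(⋀[R]^2 H)) (u v : H),
      Υ f (wedge (R := R) u v) = ν u (f v) - ν v (f u)) :
    (∀ x y z, aMul Υ (aMul Υ x y) z = aMul Υ x (aMul Υ y z)) ∧
    (∃ ε, (∀ x, aMul Υ ε x = x ∧ aMul Υ x ε = x) ∧
      ∀ x, ∃ y, aMul Υ x y = ε ∧ aMul Υ y x = ε) := by
  have hadd := upsilon_add hΥ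
  have hequiv := upsilon_actf_comp_actf hΥ (nu_map_map2 hν)
  exact ⟨aMul_assoc hadd hequiv, aOne, fun x => ⟨aOne_aMul hadd x, aMul_aOne hadd x⟩,
    fun x => ⟨aInv x, aMul_aInv hadd x, aInv_aMul hadd x⟩⟩

/-- The operation
`(F', f', A')·(F, f, A) = (F' + A'·F + Υ_{f'} ∘ (A'·f) − Υ_{A'·f} ∘ f', f' + A'·f, A'A)` makes
the set `𝒜 = Hom(H, 𝔱) × Hom(H, Λ²H) × GL(H)` into a group. -/
theorem stmt11 (P : Ideal ℤ) [P.IsPrime] (hP2 : (2 : ℤ) ∉ P) (hP3 : (3 : ℤ) ∉ P)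
    [Algebra ℤ R] [IsLocalization.AtPrime R P] {g : ℕ} (hg : 1 ≤ g)
    (e : Module.Basis (Fin (2 * g)) R H)
    (ν : H →ₗ[R] ↥(⋀[R]^2 H) →ₗ[R] ↥(tSub R H))
    (hν : ∀ u v w : H,
      (↑(ν u (wedge (R := R) v w)) : H ⊗[R] ↥(⋀[R]^2 H)) =
        ((2 : R) * ⅟(3 : R)) • u ⊗ₜ[R] wedge (R := R) v w -
          ⅟(3 : R) • v ⊗ₜ[R] wedge (R := R) w u -
          ⅟(3 : R) • w ⊗ₜ[R] wedge (R := R) u v)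
    (Υ : (H →ₗ[R] ↥(⋀[R]^2 H)) → (↥(⋀[R]^2 H) →ₗ[R] ↥(tSub R H)))
    (hΥ : ∀ (f : H →ₗ[R] ↥(⋀[R]^2 H)) (u v : H),
      Υ f (wedge (R := R) u v) = ν u (f v) - ν v (f u)) :
    (∀ x y z, aMul Υ (aMul Υ x y) z = aMul Υ x (aMul Υ y z)) ∧
    (∃ ε, (∀ x, aMul Υ ε x = x ∧ aMul Υ x ε = x) ∧
      ∀ x, ∃ y, aMul Υ x y = ε ∧ aMul Υ y x = ε) :=
  stmt11_general ν hν Υ hΥ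

end A3

end Paper
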